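/- arXiv:2201.03698 — 3 statements merged into one kernel-verified Lean document; each statement's English description precedes it below -/
import Mathlib

section
/- Theorem 1 (soundness of the IMDP abstraction). For every abstract state ŝ ∈ Ŝ, every concrete state s ∈ ŝ, and every time horizon k ∈ ℕ, the k-step failure probability of the concrete model is bounded by the abstract value: p(s,k) ≤ v̂(ŝ,k). -/
/-!
Induction on the horizon `k`, uniformly in the abstract state. A fail-labelled abstract state has
value `1`, which bounds every failure probability. Otherwise no state of `ŝ` fails, and for
`s ∈ ŝ` we pick a piece `ŝⱼ ∋ s`: the recursion for `p s (k + 1)` is then dominated term by term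
by the `j`-th sum in the recursion for `v̂ ŝ (k + 1)`, since `π s a ≤ π̂_U ŝⱼ a` and
`E s a ∈ Ê ŝⱼ a`, and that sum is at most the maximum over pieces.
-/

open Finset Set

section FailureProbability

variable {S A : Type*} [Fintype A] {E : S → A → S} {π : S → A → ℝ} {F : Set S}
  {p : S → ℕ → ℝ}

theorem failureProb_mem_Icc (hπ_nonneg : ∀ s a, 0 ≤ π s a) (hπ_sum : ∀ s, ∑ a, π s a = 1)
    (hp_fail : ∀ s k, s ∈ F → p s k = 1) (hp_zero : ∀ s, s ∉ F → p s 0 = 0)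
    (hp_succ : ∀ s k, s ∉ F → p s (k + 1) = ∑ a, π s a * p (E s a) k) :
    ∀ k s, p s k ∈ Icc (0 : ℝ) 1 := by
  intro k
  induction k with
  | zero =>
    intro s
    by_cases hs : s ∈ F
    · simp [hp_fail s 0 hs]
    · simp [hp_zero s hs]
  | succ k ih =>
    intro s
    by_cases hs : s ∈ F
    · simp [hp_fail s (k + 1) hs]
    · rw [hp_succ s k hs]
      exact (convex_Icc 0 1).sum_mem (fun a _ => hπ_nonneg s a) (hπ_sum s) fun a _ => ih (E s a)

end FailureProbability

theorem imdp_abstraction_sound_general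
    {S : Type*} {A : Type*} [Fintype A] [Nonempty A]
    (E : S → A → S) (π : S → A → ℝ) (F : Set S)
    (hπ_nonneg : ∀ s a, 0 ≤ π s a)
    (hπ_sum : ∀ s, ∑ a, π s a = 1)
    -- the k-step failure probability of the concrete model
    (p : S → ℕ → ℝ)
    (hp_fail : ∀ s k, s ∈ F → p s k = 1)
    (hp_zero : ∀ s, s ∉ F → p s 0 = 0)
    (hp_succ : ∀ s k, s ∉ F → p s (k + 1) = ∑ a, π s a * p (E s a) k)
    -- the IMDP abstraction: a finite set of abstract states, each a subset of S
    {Shat : Type*}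
    (conc : Shat → Set S)
    -- each abstract state is equipped with a finite nonempty family of pieces
    (J : Shat → Type*) [∀ sh, Fintype (J sh)] [∀ sh, Nonempty (J sh)]
    (piece : (sh : Shat) → J sh → Set S)
    (hcover : ∀ sh, conc sh ⊆ ⋃ j, piece sh j)
    -- environment abstraction
    (Ehat : (sh : Shat) → J sh → A → Shat)
    (hEhat : ∀ sh (j : J sh) (a : A) (s : S), s ∈ piece sh j → E s a ∈ conc (Ehat sh j a))
    -- policy upper bounds
    (πU : (sh : Shat) → J sh → A → ℝ)
    (hπU : ∀ sh (j : J sh) (a : A) (s : S), s ∈ piece sh j → π s a ≤ πU sh j a)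
    -- fail labelling
    (failLab : Shat → Prop)
    (hfail : ∀ sh, (conc sh ∩ F).Nonempty → failLab sh)
    -- the abstract value
    (vhat : Shat → ℕ → ℝ)
    (hv_fail : ∀ sh k, failLab sh → vhat sh k = 1)
    (hv_zero : ∀ sh, ¬ failLab sh → vhat sh 0 = 0)
    (hv_succ : ∀ sh k, ¬ failLab sh →
      vhat sh (k + 1) =
        Finset.univ.sup' Finset.univ_nonempty
          (fun j : J sh => ∑ a, πU sh j a * vhat (Ehat sh j a) k)) :
    ∀ (sh : Shat) (s : S), s ∈ conc sh → ∀ k : ℕ, p s k ≤ vhat sh k := by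
  have hp_mem := failureProb_mem_Icc hπ_nonneg hπ_sum hp_fail hp_zero hp_succ
  have hle_of_fail : ∀ sh s k, failLab sh → p s k ≤ vhat sh k := fun sh s k hf => by
    rw [hv_fail sh k hf]
    exact (hp_mem k s).2
  have hnotMem : ∀ sh s, s ∈ conc sh → ¬ failLab sh → s ∉ F := fun sh s hs hf hsF =>
    hf (hfail sh ⟨s, hs, hsF⟩)
  intro sh s hs k
  by_cases hf : failLab sh
  · exact hle_of_fail sh s k hf
  induction k generalizing sh s with
  | zero => rw [hp_zero s (hnotMem sh s hs hf), hv_zero sh hf]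
  | succ k ih =>
    obtain ⟨j, hj⟩ := mem_iUnion.mp (hcover sh hs)
    rw [hp_succ s k (hnotMem sh s hs hf), hv_succ sh k hf]
    refine le_trans ?_ (le_sup' _ (mem_univ j))
    gcongr with a
    · exact (hp_mem k (E s a)).1
    · -- the piece `j` contains `s`, so its upper bound dominates a genuine probability
      exact (hπ_nonneg s a).trans (hπU sh j a s hj)
    · exact hπU sh j a s hj
    · by_cases hf' : failLab (Ehat sh j a)
      · exact hle_of_fail _ _ k hf'
      · exact ih _ _ (hEhat sh j a s hj) hf'

/-- Theorem 1 (soundness of the IMDP abstraction): for every abstract state `sh`,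
every concrete state `s ∈ sh` and every horizon `k`, the `k`-step failure
probability of the concrete RL execution model is bounded by the abstract value
computed on the IMDP abstraction. -/
theorem imdp_abstraction_sound
    {S : Type*} {A : Type*} [Fintype A] [Nonempty A]
    (E : S → A → S) (π : S → A → ℝ) (F : Set S)
    (hπ_nonneg : ∀ s a, 0 ≤ π s a)
    (hπ_sum : ∀ s, ∑ a, π s a = 1)
    -- the k-step failure probability of the concrete model
    (p : S → ℕ → ℝ)
    (hp_fail : ∀ s k, s ∈ F → p s k = 1)
    (hp_zero : ∀ s, s ∉ F → p s 0 = 0)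
    (hp_succ : ∀ s k, s ∉ F → p s (k + 1) = ∑ a, π s a * p (E s a) k)
    -- the IMDP abstraction: a finite set of abstract states, each a subset of S
    {Shat : Type*} [Fintype Shat]
    (conc : Shat → Set S)
    -- each abstract state is equipped with a finite nonempty family of pieces
    (J : Shat → Type*) [∀ sh, Fintype (J sh)] [∀ sh, Nonempty (J sh)]
    (piece : (sh : Shat) → J sh → Set S)
    (hcover : ∀ sh, conc sh ⊆ ⋃ j, piece sh j)
    -- environment abstraction
    (Ehat : (sh : Shat) → J sh → A → Shat)
    (hEhat : ∀ sh (j : J sh) (a : A) (s : S), s ∈ piece sh j → E s a ∈ conc (Ehat sh j a))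
    -- policy upper bounds
    (πU : (sh : Shat) → J sh → A → ℝ)
    (hπU_nonneg : ∀ sh (j : J sh) (a : A), 0 ≤ πU sh j a)
    (hπU : ∀ sh (j : J sh) (a : A) (s : S), s ∈ piece sh j → π s a ≤ πU sh j a)
    -- fail labelling
    (failLab : Shat → Prop)
    (hfail : ∀ sh, (conc sh ∩ F).Nonempty → failLab sh)
    -- the abstract value
    (vhat : Shat → ℕ → ℝ)
    (hv_fail : ∀ sh k, failLab sh → vhat sh k = 1)
    (hv_zero : ∀ sh, ¬ failLab sh → vhat sh 0 = 0)
    (hv_succ : ∀ sh k, ¬ failLab sh →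
      vhat sh (k + 1) =
        Finset.univ.sup' Finset.univ_nonempty
          (fun j : J sh => ∑ a, πU sh j a * vhat (Ehat sh j a) k)) :
    ∀ (sh : Shat) (s : S), s ∈ conc sh → ∀ k : ℕ, p s k ≤ vhat sh k :=
  imdp_abstraction_sound_general E π F hπ_nonneg hπ_sum p hp_fail hp_zero hp_succ conc J piece
    hcover Ehat hEhat πU hπU failLab hfail vhat hv_fail hv_zero hv_succ
end

section
/- Corollary (solving the RL verification problem via the abstraction). Let S_0 ⊆ S be a set of initial states, Ŝ_0 ⊆ Ŝ a set of initial abstract states such that every s ∈ S_0 belongs to some ŝ ∈ Ŝ_0, and let p_safe ∈ [0,1] and k ∈ ℕ. If v̂(ŝ,k) ≤ p_safe for every ŝ ∈ Ŝ_0, then p(s,k) ≤ p_safe for every s ∈ S_0. -/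
/-!
Induction on `k` shows `p s k ≤ vhat sh k` whenever `s ∈ conc sh`. If `sh` is labelled fail, the
bound is `p ≤ 1`. Otherwise `s ∉ F`; choose a piece `sh_j` containing `s`: each successor
`E s a` lies in `Ehat sh j a` and `π s a ≤ πU sh j a`, so with `0 ≤ p ≤ vhat` at horizon `k` the
sum defining `p s (k + 1)` is bounded by the `j`-th term of the maximum defining `vhat sh (k + 1)`.
-/

open Finset

section

variable {S A : Type*}

structure IsIMDPAbstraction {Shat : Type*} {J : Shat → Type*} (E : S → A → S) (π : S → A → ℝ)
    (F : Set S) (conc : Shat → Set S) (piece : (sh : Shat) → J sh → Set S)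
    (Ehat : (sh : Shat) → J sh → A → Shat) (πU : (sh : Shat) → J sh → A → ℝ)
    (failLab : Shat → Prop) : Prop where
  cover : ∀ sh, conc sh ⊆ ⋃ j, piece sh j
  env : ∀ sh (j : J sh) (a : A) (s : S), s ∈ piece sh j → E s a ∈ conc (Ehat sh j a)
  policy : ∀ sh (j : J sh) (a : A) (s : S), s ∈ piece sh j → π s a ≤ πU sh j a
  fail : ∀ sh, (conc sh ∩ F).Nonempty → failLab sh

variable [Fintype A]

structure IsFailureProb (E : S → A → S) (π : S → A → ℝ) (F : Set S) (p : S → ℕ → ℝ) : Prop where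
  fail : ∀ s k, s ∈ F → p s k = 1
  zero : ∀ s, s ∉ F → p s 0 = 0
  succ : ∀ s k, s ∉ F → p s (k + 1) = ∑ a, π s a * p (E s a) k

structure IsAbstractValue {Shat : Type*} {J : Shat → Type*} [∀ sh, Fintype (J sh)]
    [∀ sh, Nonempty (J sh)] (Ehat : (sh : Shat) → J sh → A → Shat)
    (πU : (sh : Shat) → J sh → A → ℝ) (failLab : Shat → Prop) (vhat : Shat → ℕ → ℝ) : Prop where
  fail : ∀ sh k, failLab sh → vhat sh k = 1
  zero : ∀ sh, ¬ failLab sh → vhat sh 0 = 0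
  succ : ∀ sh k, ¬ failLab sh →
    vhat sh (k + 1) =
      univ.sup' univ_nonempty (fun j : J sh => ∑ a, πU sh j a * vhat (Ehat sh j a) k)

namespace IsFailureProb

variable {E : S → A → S} {π : S → A → ℝ} {F : Set S} {p : S → ℕ → ℝ}

theorem nonneg (hp : IsFailureProb E π F p) (hπ_nonneg : ∀ s a, 0 ≤ π s a) (k : ℕ) (s : S) :
    0 ≤ p s k := by
  induction k generalizing s with
  | zero => by_cases hs : s ∈ F <;> simp [hp.fail, hp.zero, hs]
  | succ k ih =>
    by_cases hs : s ∈ F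
    · simp [hp.fail, hs]
    · rw [hp.succ s k hs]
      exact sum_nonneg fun a _ => mul_nonneg (hπ_nonneg s a) (ih _)

theorem le_one (hp : IsFailureProb E π F p) (hπ_nonneg : ∀ s a, 0 ≤ π s a)
    (hπ_sum : ∀ s, ∑ a, π s a = 1) (k : ℕ) (s : S) : p s k ≤ 1 := by
  induction k generalizing s with
  | zero => by_cases hs : s ∈ F <;> simp [hp.fail, hp.zero, hs]
  | succ k ih =>
    by_cases hs : s ∈ F
    · simp [hp.fail, hs]
    · calc p s (k + 1) = ∑ a, π s a * p (E s a) k := hp.succ s k hs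
        _ ≤ ∑ a, π s a := sum_le_sum fun a _ => mul_le_of_le_one_right (hπ_nonneg s a) (ih _)
        _ = 1 := hπ_sum s

theorem le_abstractValue {Shat : Type*} {J : Shat → Type*} [∀ sh, Fintype (J sh)]
    [∀ sh, Nonempty (J sh)] {conc : Shat → Set S} {piece : (sh : Shat) → J sh → Set S}
    {Ehat : (sh : Shat) → J sh → A → Shat} {πU : (sh : Shat) → J sh → A → ℝ}
    {failLab : Shat → Prop} {vhat : Shat → ℕ → ℝ} (hp : IsFailureProb E π F p)
    (hπ_nonneg : ∀ s a, 0 ≤ π s a) (hπ_sum : ∀ s, ∑ a, π s a = 1)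
    (habs : IsIMDPAbstraction E π F conc piece Ehat πU failLab)
    (hv : IsAbstractValue Ehat πU failLab vhat) (k : ℕ) :
    ∀ sh, ∀ s ∈ conc sh, p s k ≤ vhat sh k := by
  induction k with
  | zero =>
    intro sh s hs
    by_cases hsF : s ∈ F
    · rw [hp.fail s 0 hsF, hv.fail sh 0 (habs.fail sh ⟨s, hs, hsF⟩)]
    · rw [hp.zero s hsF]
      by_cases hfail : failLab sh <;> simp [hv.fail, hv.zero, hfail]
  | succ k ih =>
    intro sh s hs
    by_cases hfail : failLab sh
    · rw [hv.fail sh _ hfail]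
      exact hp.le_one hπ_nonneg hπ_sum _ s
    have hsF : s ∉ F := fun hsF => hfail (habs.fail sh ⟨s, hs, hsF⟩)
    obtain ⟨j, hj⟩ := Set.mem_iUnion.1 (habs.cover sh hs)
    rw [hp.succ s k hsF, hv.succ sh k hfail]
    refine le_trans (sum_le_sum fun a _ => ?_)
      (le_sup' (fun j : J sh => ∑ a, πU sh j a * vhat (Ehat sh j a) k) (mem_univ j))
    have hsucc := ih _ _ (habs.env sh j a s hj)
    calc π s a * p (E s a) k ≤ π s a * vhat (Ehat sh j a) k :=
          mul_le_mul_of_nonneg_left hsucc (hπ_nonneg s a)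
      _ ≤ πU sh j a * vhat (Ehat sh j a) k :=
          mul_le_mul_of_nonneg_right (habs.policy sh j a s hj)
            ((hp.nonneg hπ_nonneg k _).trans hsucc)

end IsFailureProb

end

theorem rl_verification_via_abstraction_general
    {S : Type*} {A : Type*} [Fintype A]
    (E : S → A → S) (π : S → A → ℝ) (F : Set S)
    (hπ_nonneg : ∀ s a, 0 ≤ π s a)
    (hπ_sum : ∀ s, ∑ a, π s a = 1)
    -- the k-step failure probability of the concrete model
    (p : S → ℕ → ℝ)
    (hp_fail : ∀ s k, s ∈ F → p s k = 1)
    (hp_zero : ∀ s, s ∉ F → p s 0 = 0)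
    (hp_succ : ∀ s k, s ∉ F → p s (k + 1) = ∑ a, π s a * p (E s a) k)
    -- the IMDP abstraction: a finite set of abstract states, each a subset of S
    {Shat : Type*} [Fintype Shat]
    (conc : Shat → Set S)
    -- each abstract state is equipped with a finite nonempty family of pieces
    (J : Shat → Type*) [∀ sh, Fintype (J sh)] [∀ sh, Nonempty (J sh)]
    (piece : (sh : Shat) → J sh → Set S)
    (hcover : ∀ sh, conc sh ⊆ ⋃ j, piece sh j)
    -- environment abstraction
    (Ehat : (sh : Shat) → J sh → A → Shat)
    (hEhat : ∀ sh (j : J sh) (a : A) (s : S), s ∈ piece sh j → E s a ∈ conc (Ehat sh j a))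
    -- policy upper bounds
    (πU : (sh : Shat) → J sh → A → ℝ)
    (hπU : ∀ sh (j : J sh) (a : A) (s : S), s ∈ piece sh j → π s a ≤ πU sh j a)
    -- fail labelling
    (failLab : Shat → Prop)
    (hfail : ∀ sh, (conc sh ∩ F).Nonempty → failLab sh)
    -- the abstract value
    (vhat : Shat → ℕ → ℝ)
    (hv_fail : ∀ sh k, failLab sh → vhat sh k = 1)
    (hv_zero : ∀ sh, ¬ failLab sh → vhat sh 0 = 0)
    (hv_succ : ∀ sh k, ¬ failLab sh →
      vhat sh (k + 1) =
        Finset.univ.sup' Finset.univ_nonempty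
          (fun j : J sh => ∑ a, πU sh j a * vhat (Ehat sh j a) k))
    (S0 : Set S) (Shat0 : Set Shat)
    (hinit : ∀ s ∈ S0, ∃ sh ∈ Shat0, s ∈ conc sh)
    (p_safe : ℝ) (k : ℕ)
    (hbound : ∀ sh ∈ Shat0, vhat sh k ≤ p_safe) :
    ∀ s ∈ S0, p s k ≤ p_safe := by
  have hsound := IsFailureProb.le_abstractValue ⟨hp_fail, hp_zero, hp_succ⟩ hπ_nonneg hπ_sum
    ⟨hcover, hEhat, hπU, hfail⟩ ⟨hv_fail, hv_zero, hv_succ⟩ k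
  intro s hs
  obtain ⟨sh, hsh0, hmem⟩ := hinit s hs
  exact (hsound sh s hmem).trans (hbound sh hsh0)

/-- Corollary: solving the RL verification problem via the abstraction. If every
initial concrete state is covered by some initial abstract state and the abstract
value at horizon k of every initial abstract state is at most p_safe ∈ [0,1], then
the k-step failure probability from every initial concrete state is at most p_safe. -/
theorem rl_verification_via_abstraction
    {S : Type*} {A : Type*} [Fintype A] [Nonempty A]
    (E : S → A → S) (π : S → A → ℝ) (F : Set S)
    (hπ_nonneg : ∀ s a, 0 ≤ π s a)
    (hπ_sum : ∀ s, ∑ a, π s a = 1)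
    -- the k-step failure probability of the concrete model
    (p : S → ℕ → ℝ)
    (hp_fail : ∀ s k, s ∈ F → p s k = 1)
    (hp_zero : ∀ s, s ∉ F → p s 0 = 0)
    (hp_succ : ∀ s k, s ∉ F → p s (k + 1) = ∑ a, π s a * p (E s a) k)
    -- the IMDP abstraction: a finite set of abstract states, each a subset of S
    {Shat : Type*} [Fintype Shat]
    (conc : Shat → Set S)
    -- each abstract state is equipped with a finite nonempty family of pieces
    (J : Shat → Type*) [∀ sh, Fintype (J sh)] [∀ sh, Nonempty (J sh)]
    (piece : (sh : Shat) → J sh → Set S)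
    (hcover : ∀ sh, conc sh ⊆ ⋃ j, piece sh j)
    -- environment abstraction
    (Ehat : (sh : Shat) → J sh → A → Shat)
    (hEhat : ∀ sh (j : J sh) (a : A) (s : S), s ∈ piece sh j → E s a ∈ conc (Ehat sh j a))
    -- policy upper bounds
    (πU : (sh : Shat) → J sh → A → ℝ)
    (hπU_nonneg : ∀ sh (j : J sh) (a : A), 0 ≤ πU sh j a)
    (hπU : ∀ sh (j : J sh) (a : A) (s : S), s ∈ piece sh j → π s a ≤ πU sh j a)
    -- fail labelling
    (failLab : Shat → Prop)
    (hfail : ∀ sh, (conc sh ∩ F).Nonempty → failLab sh)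
    -- the abstract value
    (vhat : Shat → ℕ → ℝ)
    (hv_fail : ∀ sh k, failLab sh → vhat sh k = 1)
    (hv_zero : ∀ sh, ¬ failLab sh → vhat sh 0 = 0)
    (hv_succ : ∀ sh k, ¬ failLab sh →
      vhat sh (k + 1) =
        Finset.univ.sup' Finset.univ_nonempty
          (fun j : J sh => ∑ a, πU sh j a * vhat (Ehat sh j a) k))
    (S0 : Set S) (Shat0 : Set Shat)
    (hinit : ∀ s ∈ S0, ∃ sh ∈ Shat0, s ∈ conc sh)
    (p_safe : ℝ) (hp_safe : 0 ≤ p_safe ∧ p_safe ≤ 1) (k : ℕ)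
    (hbound : ∀ sh ∈ Shat0, vhat sh k ≤ p_safe) :
    ∀ s ∈ S0, p s k ≤ p_safe :=
  rl_verification_via_abstraction_general E π F hπ_nonneg hπ_sum p hp_fail hp_zero hp_succ conc J
    piece hcover Ehat hEhat πU hπU failLab hfail vhat hv_fail hv_zero hv_succ S0 Shat0 hinit p_safe
    k hbound
end

section
/- Correctness of the MILP-derived policy abstraction bounds. Let f : S → ℝ^k (k ≥ 1) assign a logit vector to each state, and suppose the policy probabilities are given by π_j(s) = softmax(f(s))^j. Let ŝ ⊆ S and suppose x_lb, x_ub ∈ ℝ^k satisfy x_lb^i ≤ f(s)^i ≤ x_ub^i for every s ∈ ŝ and every i. Fix j and define w_ub ∈ ℝ^k by w_ub^j = x_ub^j, w_ub^i = x_lb^i for i ≠ j, and w_lb ∈ ℝ^k by w_lb^j = x_lb^j, w_lb^i = x_ub^i for i ≠ j. Then softmax(w_lb)^j ≤ π_j(s) ≤ softmax(w_ub)^j for every s ∈ ŝ. -/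
/-- The softmax function on logit vectors in `ℝ^k`:
`softmax z j = exp (z j) / Σ i, exp (z i)`. -/
noncomputable def softmax {k : ℕ} (z : Fin k → ℝ) (j : Fin k) : ℝ :=
  Real.exp (z j) / ∑ i, Real.exp (z i)

/-! Writing `softmax z j = (Σ i, exp (z i - z j))⁻¹` shows that the `j`-th softmax value grows
with `z j` and decreases with every other logit, so over a box of logits it is extremal at the
corners `w_lb` and `w_ub`. -/

open Finset

lemma softmax_eq_inv_sum_exp_sub {k : ℕ} (z : Fin k → ℝ) (j : Fin k) :
    softmax z j = (∑ i, Real.exp (z i - z j))⁻¹ := by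
  simp only [softmax, Real.exp_sub, ← sum_div, inv_div]

lemma softmax_le_softmax {k : ℕ} {z w : Fin k → ℝ} {j : Fin k}
    (hj : z j ≤ w j) (hi : ∀ i, i ≠ j → w i ≤ z i) :
    softmax z j ≤ softmax w j := by
  rw [softmax_eq_inv_sum_exp_sub, softmax_eq_inv_sum_exp_sub]
  have hpos : 0 < ∑ i, Real.exp (w i - w j) :=
    sum_pos (fun i _ => Real.exp_pos _) ⟨j, mem_univ j⟩
  refine inv_anti₀ hpos (sum_le_sum fun i _ => Real.exp_le_exp.mpr ?_)
  by_cases h : i = j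
  · simp [h]
  · linarith [hi i h]

theorem policy_abstraction_bounds_correct_general
    {S : Type*} {k : ℕ}
    (f : S → Fin k → ℝ)
    (π : S → Fin k → ℝ)
    (hπ : ∀ s j, π s j = softmax (f s) j)
    (sh : Set S) (x_lb x_ub : Fin k → ℝ)
    (hbox : ∀ s ∈ sh, ∀ i, x_lb i ≤ f s i ∧ f s i ≤ x_ub i)
    (j : Fin k)
    (w_ub : Fin k → ℝ) (hwubj : w_ub j = x_ub j) (hwubi : ∀ i, i ≠ j → w_ub i = x_lb i)
    (w_lb : Fin k → ℝ) (hwlbj : w_lb j = x_lb j) (hwlbi : ∀ i, i ≠ j → w_lb i = x_ub i) :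
    ∀ s ∈ sh, softmax w_lb j ≤ π s j ∧ π s j ≤ softmax w_ub j := by
  intro s hs
  rw [hπ]
  constructor
  · refine softmax_le_softmax (hwlbj ▸ (hbox s hs j).1) fun i hij => ?_
    exact hwlbi i hij ▸ (hbox s hs i).2
  · refine softmax_le_softmax (hwubj ▸ (hbox s hs j).2) fun i hij => ?_
    exact hwubi i hij ▸ (hbox s hs i).1

/-- Correctness of the MILP-derived policy abstraction bounds: if the logits of
every state in the abstract state `sh` lie in the box `[x_lb, x_ub]`, then the
policy probability of action `j` in every state of `sh` lies between the
softmax values of the two extreme logit vectors `w_lb` and `w_ub`. -/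
theorem policy_abstraction_bounds_correct
    {S : Type*} {k : ℕ} (hk : 1 ≤ k)
    (f : S → Fin k → ℝ)
    (π : S → Fin k → ℝ)
    (hπ : ∀ s j, π s j = softmax (f s) j)
    (sh : Set S) (x_lb x_ub : Fin k → ℝ)
    (hbox : ∀ s ∈ sh, ∀ i, x_lb i ≤ f s i ∧ f s i ≤ x_ub i)
    (j : Fin k)
    (w_ub : Fin k → ℝ) (hwubj : w_ub j = x_ub j) (hwubi : ∀ i, i ≠ j → w_ub i = x_lb i)
    (w_lb : Fin k → ℝ) (hwlbj : w_lb j = x_lb j) (hwlbi : ∀ i, i ≠ j → w_lb i = x_ub i) :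
    ∀ s ∈ sh, softmax w_lb j ≤ π s j ∧ π s j ≤ softmax w_ub j :=
  policy_abstraction_bounds_correct_general f π hπ sh x_lb x_ub hbox j w_ub hwubj hwubi w_lb hwlbj
    hwlbi
end
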